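/- Positivity of the weighted speed sum (Remark 2.2): Let d ∈ {1,2,3} and N ≥ 1, let s₁,…,s_N > 0 and unit vectors ξ⁽¹⁾,…,ξ⁽ᴺ⁾ ∈ ℝ^d satisfy Σⱼ sⱼ ξ⁽ʲ⁾ = 0, and let U⁽¹⁾,…,U⁽ᴺ⁾ ∈ 𝒢 with densities ρ⁽ʲ⁾, velocities v⁽ʲ⁾, magnetic fields B⁽ʲ⁾. With α̂ⱼ = max{ ⟨ξ⁽ʲ⁾, v⁽ʲ⁾⟩ , (Σᵢ sᵢ)⁻¹ Σᵢ sᵢ ⟨ξ⁽ʲ⁾ − ξ⁽ⁱ⁾, (√ρ⁽ʲ⁾ v⁽ʲ⁾ + √ρ⁽ⁱ⁾ v⁽ⁱ⁾)/(√ρ⁽ʲ⁾ + √ρ⁽ⁱ⁾)⟩ } + 𝒞(U⁽ʲ⁾; ξ⁽ʲ⁾) + 2(Σᵢ sᵢ)⁻¹ Σᵢ sᵢ |B⁽ʲ⁾ − B⁽ⁱ⁾|/(√ρ⁽ʲ⁾ + √ρ⁽ⁱ⁾), one has Σ_{j=1}^{N} sⱼ α̂ⱼ > 0. -/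
import Mathlib


noncomputable section

open Finset

/-- An MHD state `U = (ρ, m, B, E)` viewed as a vector in `ℝ⁸`. -/
abbrev MHDState := Fin 8 → ℝ

namespace MHD

/-- Build a state from density, momentum, magnetic field, total energy. -/
def mk (ρ : ℝ) (m B : Fin 3 → ℝ) (E : ℝ) : MHDState :=
  ![ρ, m 0, m 1, m 2, B 0, B 1, B 2, E]

/-- Density component. -/
def dens (U : MHDState) : ℝ := U 0

/-- Momentum components. -/
def mom (U : MHDState) : Fin 3 → ℝ := ![U 1, U 2, U 3]

/-- Magnetic field components. -/
def magB (U : MHDState) : Fin 3 → ℝ := ![U 4, U 5, U 6]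

/-- Total energy component. -/
def toten (U : MHDState) : ℝ := U 7

/-- Euclidean dot product on `ℝ³`. -/
def dot3 (a b : Fin 3 → ℝ) : ℝ := ∑ k, a k * b k

/-- Squared Euclidean norm on `ℝ³`. -/
def sq3 (a : Fin 3 → ℝ) : ℝ := dot3 a a

/-- Euclidean norm on `ℝ³`. -/
def norm3 (a : Fin 3 → ℝ) : ℝ := Real.sqrt (sq3 a)

/-- Velocity `v = m / ρ`. -/
def vel (U : MHDState) : Fin 3 → ℝ := fun k => mom U k / dens U

/-- Internal energy `𝓔(U) = E − (|m|²/ρ + |B|²)/2`. -/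
def intE (U : MHDState) : ℝ := toten U - (sq3 (mom U) / dens U + sq3 (magB U)) / 2

/-- Specific internal energy `e = 𝓔(U)/ρ`. -/
def specE (U : MHDState) : ℝ := intE U / dens U

/-- The admissible state set `𝒢`. -/
def Gset : Set MHDState := {U | 0 < dens U ∧ 0 < intE U}

/-- The set `𝒢_ρ` of states with positive density. -/
def Grho : Set MHDState := {U | 0 < dens U}

/-- Euclidean dot product on `ℝ⁸`. -/
def dot8 (U V : MHDState) : ℝ := ∑ i, U i * V i

/-- The vector `n* = (|v*|²/2, −v*, −B*, 1)`. -/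
def nstar (vs Bs : Fin 3 → ℝ) : MHDState :=
  mk (sq3 vs / 2) (fun k => -vs k) (fun k => -Bs k) 1

/-- The set `𝒢*`. -/
def GstarSet : Set MHDState :=
  {U | 0 < dens U ∧ ∀ vs Bs : Fin 3 → ℝ, 0 < dot8 U (nstar vs Bs) + sq3 Bs / 2}

/-- Equation of state assumption: for `ρ > 0`, `e > 0 ↔ p(ρ,e) > 0`. -/
def IsEOS (pfun : ℝ → ℝ → ℝ) : Prop :=
  ∀ ρ e : ℝ, 0 < ρ → (0 < e ↔ 0 < pfun ρ e)

/-- Pressure of a state, via the equation of state. -/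
def pres (pfun : ℝ → ℝ → ℝ) (U : MHDState) : ℝ := pfun (dens U) (specE U)

/-- Total pressure `p + |B|²/2`. -/
def ptot (pfun : ℝ → ℝ → ℝ) (U : MHDState) : ℝ := pres pfun U + sq3 (magB U) / 2

/-- The `i`-th flux `F_i(U)`. -/
def flux (pfun : ℝ → ℝ → ℝ) (i : Fin 3) (U : MHDState) : MHDState :=
  mk (dens U * vel U i)
    (fun k => dens U * vel U i * vel U k - magB U i * magB U k
      + ptot pfun U * (if k = i then 1 else 0))
    (fun k => vel U i * magB U k - magB U i * vel U k)
    (vel U i * (toten U + ptot pfun U) - magB U i * dot3 (vel U) (magB U))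

/-- Directional inner product `⟨ξ, w⟩ = Σ_{k<d} ξ_k w_k` for `ξ ∈ ℝ^d`, `w ∈ ℝ³`, `d ≤ 3`. -/
def dirDot {d : ℕ} (hd : d ≤ 3) (ξ : Fin d → ℝ) (w : Fin 3 → ℝ) : ℝ :=
  ∑ k, ξ k * w (Fin.castLE hd k)

/-- Directional flux `⟨ξ, F(U)⟩ = Σ_{i<d} ξ_i F_i(U)`. -/
def dirFlux (pfun : ℝ → ℝ → ℝ) {d : ℕ} (hd : d ≤ 3) (ξ : Fin d → ℝ) (U : MHDState) :
    MHDState :=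
  ∑ i, ξ i • flux pfun (Fin.castLE hd i) U

/-- `ξ` is a unit vector. -/
def unitVec {d : ℕ} (ξ : Fin d → ℝ) : Prop := (∑ k, (ξ k) ^ 2) = 1

/-- `𝒞_s(U) = p / (ρ √(2e))`. -/
def soundC (pfun : ℝ → ℝ → ℝ) (U : MHDState) : ℝ :=
  pres pfun U / (dens U * Real.sqrt (2 * specE U))

/-- `𝒞(U; ξ)`. -/
def waveC (pfun : ℝ → ℝ → ℝ) {d : ℕ} (hd : d ≤ 3) (ξ : Fin d → ℝ) (U : MHDState) : ℝ :=
  Real.sqrt ((soundC pfun U ^ 2 + sq3 (magB U) / dens U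
    + Real.sqrt ((soundC pfun U ^ 2 + sq3 (magB U) / dens U) ^ 2
      - 4 * soundC pfun U ^ 2 * dirDot hd ξ (magB U) ^ 2 / dens U)) / 2)

/-- Roe-type averaged velocity `v̄ = (√ρ v + √ρ̃ ṽ)/(√ρ + √ρ̃)`. -/
def roeV (U Ut : MHDState) : Fin 3 → ℝ := fun k =>
  (Real.sqrt (dens U) * vel U k + Real.sqrt (dens Ut) * vel Ut k)
    / (Real.sqrt (dens U) + Real.sqrt (dens Ut))

/-- `α_r(U, Ũ; ξ)`. -/
def alphaR (pfun : ℝ → ℝ → ℝ) {d : ℕ} (hd : d ≤ 3) (ξ : Fin d → ℝ) (U Ut : MHDState) : ℝ :=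
  max (dirDot hd ξ (vel U)) (dirDot hd ξ (roeV U Ut)) + waveC pfun hd ξ U
    + norm3 (magB U - magB Ut) / (Real.sqrt (dens U) + Real.sqrt (dens Ut))

/-- `α_l(U, Ũ; ξ)`. -/
def alphaL (pfun : ℝ → ℝ → ℝ) {d : ℕ} (hd : d ≤ 3) (ξ : Fin d → ℝ) (U Ut : MHDState) : ℝ :=
  min (dirDot hd ξ (vel U)) (dirDot hd ξ (roeV U Ut)) - waveC pfun hd ξ U
    - norm3 (magB U - magB Ut) / (Real.sqrt (dens U) + Real.sqrt (dens Ut))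

/-- `α_⋆(U, Ũ; ξ)`. -/
def alphaS (pfun : ℝ → ℝ → ℝ) {d : ℕ} (hd : d ≤ 3) (ξ : Fin d → ℝ) (U Ut : MHDState) : ℝ :=
  max (|dirDot hd ξ (vel U)|) (|dirDot hd ξ (roeV U Ut)|) + waveC pfun hd ξ U
    + norm3 (magB U - magB Ut) / (Real.sqrt (dens U) + Real.sqrt (dens Ut))

/-- The vector `θ(U, v*, B*) = 2^{−1/2}(B − B*, √ρ(v − v*), √(2ρe)) ∈ ℝ⁷`. -/
def theta (U : MHDState) (vs Bs : Fin 3 → ℝ) : Fin 7 → ℝ :=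
  ![(magB U 0 - Bs 0) / Real.sqrt 2,
    (magB U 1 - Bs 1) / Real.sqrt 2,
    (magB U 2 - Bs 2) / Real.sqrt 2,
    Real.sqrt (dens U) * (vel U 0 - vs 0) / Real.sqrt 2,
    Real.sqrt (dens U) * (vel U 1 - vs 1) / Real.sqrt 2,
    Real.sqrt (dens U) * (vel U 2 - vs 2) / Real.sqrt 2,
    Real.sqrt (2 * intE U) / Real.sqrt 2]

/-- `|θ|²`. -/
def thetaSq (U : MHDState) (vs Bs : Fin 3 → ℝ) : ℝ := ∑ k, theta U vs Bs k ^ 2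

/-- Godunov–Powell source vector `S(U) = (0, B, v, v·B)`. -/
def source (U : MHDState) : MHDState := mk 0 (magB U) (vel U) (dot3 (vel U) (magB U))

/-- HLL numerical flux with clamped wave speeds `σm ≤ 0 ≤ σp`. -/
def hllFlux (pfun : ℝ → ℝ → ℝ) {d : ℕ} (hd : d ≤ 3) (ξ : Fin d → ℝ)
    (Um Up : MHDState) (σm σp : ℝ) : MHDState :=
  (σp - σm)⁻¹ • (σp • dirFlux pfun hd ξ Um - σm • dirFlux pfun hd ξ Up
    + (σm * σp) • (Up - Um))

/-- HLL intermediate state `H(U⁻, U⁺; ξ)`. -/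
def hllMid (pfun : ℝ → ℝ → ℝ) {d : ℕ} (hd : d ≤ 3) (ξ : Fin d → ℝ)
    (Um Up : MHDState) (σm σp : ℝ) : MHDState :=
  (σp - σm)⁻¹ • (σp • Up - dirFlux pfun hd ξ Up - σm • Um + dirFlux pfun hd ξ Um)

/-- The quantity `α̂_j` of Theorem 2.3. -/
def alphaHat (pfun : ℝ → ℝ → ℝ) {d : ℕ} (hd : d ≤ 3) {N : ℕ}
    (s : Fin N → ℝ) (ξ : Fin N → Fin d → ℝ) (U : Fin N → MHDState) (j : Fin N) : ℝ :=
  max (dirDot hd (ξ j) (vel (U j)))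
      ((∑ i, s i)⁻¹ * ∑ i, s i * dirDot hd (fun k => ξ j k - ξ i k) (roeV (U j) (U i)))
  + waveC pfun hd (ξ j) (U j)
  + 2 * (∑ i, s i)⁻¹ * ∑ i, s i *
      (norm3 (magB (U j) - magB (U i)) / (Real.sqrt (dens (U j)) + Real.sqrt (dens (U i))))

def d1le3 : (1 : ℕ) ≤ 3 := by omega
def d2le3 : (2 : ℕ) ≤ 3 := by omega

/-- In one dimension the direction `ξ = 1`. -/
def xi1 : Fin 1 → ℝ := fun _ => 1

lemma sq3_nonneg (a : Fin 3 → ℝ) : 0 ≤ sq3 a := by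
  unfold sq3 dot3
  exact Finset.sum_nonneg fun k _ => mul_self_nonneg _

lemma roeV_comm (U V : MHDState) : roeV U V = roeV V U := by
  funext k; unfold roeV; ring

lemma waveC_pos (pfun : ℝ → ℝ → ℝ) (hEOS : IsEOS pfun)
    {d : ℕ} (hd : d ≤ 3) (ξ : Fin d → ℝ) (U : MHDState) (hU : U ∈ Gset) :
    0 < waveC pfun hd ξ U := by
  obtain ⟨hρ, hE⟩ := hU
  have he : 0 < specE U := div_pos hE hρ
  have hp : 0 < pres pfun U := (hEOS _ _ hρ).mp he
  have hsq : 0 < Real.sqrt (2 * specE U) := Real.sqrt_pos.mpr (by linarith)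
  have hCs : 0 < soundC pfun U := div_pos hp (mul_pos hρ hsq)
  have hA : 0 < soundC pfun U ^ 2 + sq3 (magB U) / dens U :=
    add_pos_of_pos_of_nonneg (pow_pos hCs 2) (div_nonneg (sq3_nonneg _) hρ.le)
  apply Real.sqrt_pos.mpr
  have := Real.sqrt_nonneg ((soundC pfun U ^ 2 + sq3 (magB U) / dens U) ^ 2
      - 4 * soundC pfun U ^ 2 * dirDot hd ξ (magB U) ^ 2 / dens U)
  linarith

lemma dirDot_sub {d : ℕ} (hd : d ≤ 3) (ξ η : Fin d → ℝ) (w : Fin 3 → ℝ) :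
    dirDot hd (fun k => ξ k - η k) w = dirDot hd ξ w - dirDot hd η w := by
  unfold dirDot
  rw [← Finset.sum_sub_distrib]
  exact Finset.sum_congr rfl fun k _ => by ring

/-- Remark 2.2: positivity of the weighted speed sum `Σⱼ sⱼ α̂ⱼ > 0`. -/
theorem weighted_speed_sum_pos (pfun : ℝ → ℝ → ℝ) (hEOS : IsEOS pfun)
    {d : ℕ} (hd1 : 1 ≤ d) (hd : d ≤ 3) {N : ℕ} (hN : 1 ≤ N)
    (s : Fin N → ℝ) (hs : ∀ j, 0 < s j)
    (ξ : Fin N → Fin d → ℝ) (hξ : ∀ j, unitVec (ξ j))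
    (hsum : (∑ j, s j • ξ j) = 0)
    (U : Fin N → MHDState) (hU : ∀ j, U j ∈ Gset) :
    0 < ∑ j, s j * alphaHat pfun hd s ξ U j := by
  classical
  have hne : (Finset.univ : Finset (Fin N)).Nonempty :=
    ⟨⟨0, hN⟩, Finset.mem_univ _⟩
  have hSpos : 0 < ∑ j, s j := Finset.sum_pos (fun j _ => hs j) hne
  set g : Fin N → Fin N → ℝ :=
    fun j i => dirDot hd (fun k => ξ j k - ξ i k) (roeV (U j) (U i)) with hg
  have hanti : ∀ j i, g j i + g i j = 0 := by
    intro j i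
    simp only [hg, roeV_comm (U i) (U j), dirDot_sub]
    ring
  -- the weighted double sum of g vanishes
  have hT : (∑ j, ∑ i, s j * (s i * g j i)) = 0 := by
    have h1 : (∑ j, ∑ i, s j * (s i * g j i))
        = ∑ j, ∑ i, s i * (s j * g i j) := Finset.sum_comm
    have h2 : (∑ j, ∑ i, s j * (s i * g j i))
        = -∑ j, ∑ i, s i * (s j * g i j) := by
      rw [← Finset.sum_neg_distrib]
      refine Finset.sum_congr rfl fun j _ => ?_
      rw [← Finset.sum_neg_distrib]
      refine Finset.sum_congr rfl fun i _ => ?_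
      linear_combination s j * s i * hanti j i
    linarith [h1 ▸ h2]
  have hB : (∑ j, s j * ((∑ i, s i)⁻¹ * ∑ i, s i * g j i)) = 0 := by
    have : (∑ j, s j * ((∑ i, s i)⁻¹ * ∑ i, s i * g j i))
        = (∑ i, s i)⁻¹ * ∑ j, ∑ i, s j * (s i * g j i) := by
      simp only [Finset.mul_sum]
      exact Finset.sum_congr rfl fun j _ => Finset.sum_congr rfl fun i _ => by ring
    rw [this, hT, mul_zero]
  -- lower bound each term
  have hterm : ∀ j, s j * ((∑ i, s i)⁻¹ * ∑ i, s i * g j i)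
      + s j * waveC pfun hd (ξ j) (U j) ≤ s j * alphaHat pfun hd s ξ U j := by
    intro j
    have hmax : ((∑ i, s i)⁻¹ * ∑ i, s i * g j i)
        ≤ max (dirDot hd (ξ j) (vel (U j)))
            ((∑ i, s i)⁻¹ * ∑ i, s i * g j i) := le_max_right _ _
    have hD : 0 ≤ 2 * (∑ i, s i)⁻¹ * ∑ i, s i *
        (norm3 (magB (U j) - magB (U i))
          / (Real.sqrt (dens (U j)) + Real.sqrt (dens (U i)))) := by
      apply mul_nonneg (by positivity)
      refine Finset.sum_nonneg fun i _ => mul_nonneg (hs i).le ?_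
      apply div_nonneg (Real.sqrt_nonneg _)
      exact add_nonneg (Real.sqrt_nonneg _) (Real.sqrt_nonneg _)
    have halpha : alphaHat pfun hd s ξ U j
        = max (dirDot hd (ξ j) (vel (U j))) ((∑ i, s i)⁻¹ * ∑ i, s i * g j i)
          + waveC pfun hd (ξ j) (U j)
          + 2 * (∑ i, s i)⁻¹ * ∑ i, s i *
            (norm3 (magB (U j) - magB (U i))
              / (Real.sqrt (dens (U j)) + Real.sqrt (dens (U i)))) := rfl
    have : ((∑ i, s i)⁻¹ * ∑ i, s i * g j i) + waveC pfun hd (ξ j) (U j)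
        ≤ alphaHat pfun hd s ξ U j := by
      rw [halpha]
      linarith
    calc s j * ((∑ i, s i)⁻¹ * ∑ i, s i * g j i) + s j * waveC pfun hd (ξ j) (U j)
        = s j * (((∑ i, s i)⁻¹ * ∑ i, s i * g j i) + waveC pfun hd (ξ j) (U j)) := by ring
      _ ≤ s j * alphaHat pfun hd s ξ U j := by
          exact mul_le_mul_of_nonneg_left this (hs j).le
  have hsum1 : (∑ j, (s j * ((∑ i, s i)⁻¹ * ∑ i, s i * g j i)
      + s j * waveC pfun hd (ξ j) (U j))) ≤ ∑ j, s j * alphaHat pfun hd s ξ U j :=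
    Finset.sum_le_sum fun j _ => hterm j
  rw [Finset.sum_add_distrib, hB, zero_add] at hsum1
  have hCpos : 0 < ∑ j, s j * waveC pfun hd (ξ j) (U j) :=
    Finset.sum_pos (fun j _ => mul_pos (hs j) (waveC_pos pfun hEOS hd (ξ j) (U j) (hU j))) hne
  linarith
end MHD
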